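/- arXiv:2605.11449 — 2 statements merged into one kernel-verified Lean document; each statement's English description precedes it below -/
import Mathlib

section
/- If all vertices are modified, i.e., I = {1,…,n}, then the total number of chips in the unique final configuration of the Modified Kostant Game equals the sum of the heights of all positive coroots of Φ: |c_final| = Σ_{γ^∨ ∈ (Φ^∨)^+} ht(γ^∨), where ht(Σ_j k_j α_j^∨) = Σ_j k_j. -/
open scoped Classical RealInnerProductSpace

noncomputable section

variable {n d : ℕ}

/-- The pairing `⟨β, γ^∨⟩ = 2(β,γ)/(γ,γ)` of a vector with a coroot. -/
def rsPair (β γ : EuclideanSpace ℝ (Fin d)) : ℝ := 2 * ⟪β, γ⟫ / ⟪γ, γ⟫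

/-- The coroot `γ^∨ = 2γ/(γ,γ)`. -/
def rsCoroot (γ : EuclideanSpace ℝ (Fin d)) : EuclideanSpace ℝ (Fin d) :=
  (2 / ⟪γ, γ⟫) • γ

/-- `⟨·, γ^∨⟩` as a linear functional. -/
def corootForm (γ : EuclideanSpace ℝ (Fin d)) : EuclideanSpace ℝ (Fin d) →ₗ[ℝ] ℝ where
  toFun x := 2 * ⟪x, γ⟫ / ⟪γ, γ⟫
  map_add' x y := by simp only [inner_add_left]; ring
  map_smul' c x := by simp only [real_inner_smul_left, RingHom.id_apply, smul_eq_mul]; ring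

/-- A finite reduced crystallographic root system in the Euclidean space `ℝ^d`, together with a
chosen base of simple roots `α 0, …, α (n-1)`: every root is an integral linear combination of
the simple roots with all coefficients nonnegative or all nonpositive. -/
structure RootSystemBase (n d : ℕ) : Type where
  Φ : Finset (EuclideanSpace ℝ (Fin d))
  α : Fin n → EuclideanSpace ℝ (Fin d)
  α_mem : ∀ i, α i ∈ Φ
  nonzero : ∀ β ∈ Φ, β ≠ 0
  reduced : ∀ β ∈ Φ, ∀ t : ℝ, t • β ∈ Φ → t = 1 ∨ t = -1
  crystallographic : ∀ β ∈ Φ, ∀ γ ∈ Φ, ∃ k : ℤ, rsPair β γ = (k : ℝ)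
  reflClosed : ∀ β ∈ Φ, ∀ γ ∈ Φ, β - rsPair β γ • γ ∈ Φ
  indep : LinearIndependent ℝ α
  base : ∀ β ∈ Φ, ∃ c : Fin n → ℤ,
    β = ∑ i, (c i : ℝ) • α i ∧ ((∀ i, 0 ≤ c i) ∨ (∀ i, c i ≤ 0))

/-- The extended space `E' = E ⊕ ℝ^I`. -/
abbrev ExtSp (n d : ℕ) (I : Finset (Fin n)) : Type :=
  EuclideanSpace ℝ (Fin d) × ({p : Fin n // p ∈ I} → ℝ)

/-- The total source vector `β = ∑_{p ∈ I} β_p` in the extended space. -/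
def betaVec (n d : ℕ) (I : Finset (Fin n)) : ExtSp n d I := (0, fun _ => 1)

namespace RootSystemBase

variable (R : RootSystemBase n d)

lemma alpha_ne_zero (i : Fin n) : R.α i ≠ 0 := R.nonzero _ (R.α_mem i)

lemma inner_alpha_ne_zero (i : Fin n) : ⟪R.α i, R.α i⟫ ≠ 0 := fun h =>
  R.alpha_ne_zero i ((inner_self_eq_zero (𝕜 := ℝ)).mp h)

lemma corootForm_alpha_self (i : Fin n) : corootForm (R.α i) (R.α i) = 2 := by
  have h2 := R.inner_alpha_ne_zero i
  show 2 * ⟪R.α i, R.α i⟫ / ⟪R.α i, R.α i⟫ = 2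
  rw [mul_div_assoc, div_self h2, mul_one]

/-- The simple reflection `s_i : x ↦ x - ⟨x, α_i^∨⟩ α_i` as a linear automorphism of `E`. -/
def sRefl (i : Fin n) :
    EuclideanSpace ℝ (Fin d) ≃ₗ[ℝ] EuclideanSpace ℝ (Fin d) :=
  Module.reflection (R.corootForm_alpha_self i)

/-- The Weyl group `W`, as the subgroup of linear automorphisms of `E` generated by the
simple reflections. -/
def weyl : Subgroup (EuclideanSpace ℝ (Fin d) ≃ₗ[ℝ] EuclideanSpace ℝ (Fin d)) :=
  Subgroup.closure (Set.range R.sRefl)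

/-- `wordProd [i₁, …, i_t] = s_{i₁} ⋯ s_{i_t}`. -/
def wordProd (l : List (Fin n)) :
    EuclideanSpace ℝ (Fin d) ≃ₗ[ℝ] EuclideanSpace ℝ (Fin d) :=
  (l.map R.sRefl).prod

/-- The Weyl group element `s_{i_t} ⋯ s_{i_1}` associated to the firing sequence
`(i_1, …, i_t)`. -/
def seqProd (l : List (Fin n)) :
    EuclideanSpace ℝ (Fin d) ≃ₗ[ℝ] EuclideanSpace ℝ (Fin d) :=
  (l.reverse.map R.sRefl).prod

/-- The length function `ℓ` of the Coxeter system `(W, S)`: the minimal number of simple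
reflections needed to express `w`. -/
def len (w : EuclideanSpace ℝ (Fin d) ≃ₗ[ℝ] EuclideanSpace ℝ (Fin d)) : ℕ :=
  sInf {t | ∃ l : List (Fin n), l.length = t ∧ R.wordProd l = w}

/-- The set `W^J` of minimal length representatives of `W/W_J`, for `J = S \ {s_i : i ∈ I}`:
those `w ∈ W` with `ℓ(w s_j) > ℓ(w)` for all `j ∉ I`. -/
def minReps (I : Finset (Fin n)) :
    Set (EuclideanSpace ℝ (Fin d) ≃ₗ[ℝ] EuclideanSpace ℝ (Fin d)) :=
  {w | w ∈ R.weyl ∧ ∀ j, j ∉ I → R.len w < R.len (w * R.sRefl j)}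

/-- The Cartan matrix `a_{uv} = ⟨α_u, α_v^∨⟩` (an integer by crystallinity). -/
def cartan (u v : Fin n) : ℤ := ⌊rsPair (R.α u) (R.α v)⌋

/-- The set `Φ⁺` of positive roots. -/
def posRoots : Finset (EuclideanSpace ℝ (Fin d)) :=
  R.Φ.filter fun β => ∃ c : Fin n → ℤ, β = ∑ i, (c i : ℝ) • R.α i ∧ ∀ i, 0 ≤ c i

/-- The set `Φ_P⁺` of positive roots lying in the span of the simple roots `α_j`, `j ∈ P`. -/
def parPos (P : Finset (Fin n)) : Finset (EuclideanSpace ℝ (Fin d)) :=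
  R.posRoots.filter fun β => β ∈ Submodule.span ℝ (R.α '' (P : Set (Fin n)))

/-- `∑_{u ≠ v} (−a_{uv}) c_u + [v ∈ I]`. -/
def chipBound (I : Finset (Fin n)) (c : Fin n → ℤ) (v : Fin n) : ℤ :=
  (∑ u ∈ Finset.univ.erase v, -(R.cartan u v) * c u) + (if v ∈ I then 1 else 0)

/-- Vertex `v` is sad in the configuration `c` (Modified Kostant Game with active set `I`). -/
def Sad (I : Finset (Fin n)) (c : Fin n → ℤ) (v : Fin n) : Prop :=
  2 * c v < R.chipBound I c v

/-- Firing vertex `v`. -/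
def fire (I : Finset (Fin n)) (c : Fin n → ℤ) (v : Fin n) : Fin n → ℤ :=
  Function.update c v (R.chipBound I c v - c v)

end RootSystemBase

/-- `ValidFrom R I c l`: starting from the configuration `c`, the sequence `l` fires a sad
vertex at each step. -/
def RootSystemBase.ValidFrom (R : RootSystemBase n d) (I : Finset (Fin n)) :
    (Fin n → ℤ) → List (Fin n) → Prop
  | _, [] => True
  | c, v :: l => R.Sad I c v ∧ RootSystemBase.ValidFrom R I (R.fire I c v) l

namespace RootSystemBase

variable (R : RootSystemBase n d)

/-- A valid firing sequence: starts at the zero configuration and fires a sad vertex at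
each step. -/
def Valid (I : Finset (Fin n)) (l : List (Fin n)) : Prop := R.ValidFrom I 0 l

/-- The configuration reached after playing the sequence `l` from the zero configuration. -/
def play (I : Finset (Fin n)) (l : List (Fin n)) : Fin n → ℤ :=
  l.foldl (R.fire I) 0

/-- A maximal valid firing sequence: no vertex is sad in the final configuration. -/
def MaximalSeq (I : Finset (Fin n)) (l : List (Fin n)) : Prop :=
  R.Valid I l ∧ ∀ v, ¬ R.Sad I (R.play I l) v

/-- The (integer) coefficients of a vector in the basis of simple coroots, when they exist. -/
def corootCoeffs (x : EuclideanSpace ℝ (Fin d)) : Fin n → ℤ :=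
  if h : ∃ k : Fin n → ℤ, x = ∑ j, (k j : ℝ) • rsCoroot (R.α j) then h.choose else 0

/-- The `I`-height of a (co)vector: the sum over `j ∈ I` of its coefficients in the basis
of simple coroots. -/
def htI (I : Finset (Fin n)) (x : EuclideanSpace ℝ (Fin d)) : ℤ :=
  ∑ j ∈ I, R.corootCoeffs x j

end RootSystemBase

/-- The extended pairing `⟨·, α_i^∨⟩` on `E' = E ⊕ ℝ^I`, determined by
`⟨β_p, α_i^∨⟩ = −δ_{pi}`, as a linear functional. -/
def extForm (R : RootSystemBase n d) (I : Finset (Fin n)) (i : Fin n) :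
    ExtSp n d I →ₗ[ℝ] ℝ :=
  (corootForm (R.α i)).comp (LinearMap.fst ℝ _ _) -
    (if h : i ∈ I then
      (LinearMap.proj (R := ℝ) (φ := fun _ : {p : Fin n // p ∈ I} => ℝ) ⟨i, h⟩).comp
        (LinearMap.snd ℝ _ _)
    else 0)

namespace RootSystemBase

variable (R : RootSystemBase n d)

lemma extForm_apply (I : Finset (Fin n)) (i : Fin n) (x : ExtSp n d I) :
    extForm R I i x = corootForm (R.α i) x.1 - (if h : i ∈ I then x.2 ⟨i, h⟩ else 0) := by
  by_cases h : i ∈ I <;> simp [extForm, h]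

lemma extForm_alpha (I : Finset (Fin n)) (i : Fin n) :
    extForm R I i ((R.α i, 0) : ExtSp n d I) = 2 := by
  rw [R.extForm_apply]
  simp [R.corootForm_alpha_self i]

/-- The simple reflection `s_i : x ↦ x − ⟨x, α_i^∨⟩ α_i` on the extended space `E'`. -/
def extRefl (I : Finset (Fin n)) (i : Fin n) : ExtSp n d I ≃ₗ[ℝ] ExtSp n d I :=
  Module.reflection (R.extForm_alpha I i)

/-- The extended pairing `⟨x, α_i^∨⟩` for `x ∈ E'`. -/
def extPair (I : Finset (Fin n)) (x : ExtSp n d I) (i : Fin n) : ℝ := extForm R I i x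

/-- The action of `s_{i_t} ⋯ s_{i_1}` on the extended space `E'`. -/
def extSeqProd (I : Finset (Fin n)) (l : List (Fin n)) : ExtSp n d I ≃ₗ[ℝ] ExtSp n d I :=
  (l.reverse.map (R.extRefl I)).prod

end RootSystemBase

/-!
With every vertex modified, a configuration `c` corresponds to `x = ∑ c_v α_v`, and
`chipBound c v - 2 c_v = ⟨ρ - x, α_v^∨⟩` because `⟨ρ, α_v^∨⟩ = 1`. So firing `v` replaces `ρ - x`
by `s_v (ρ - x)`, and `v` is sad exactly when `⟨ρ - x, α_v^∨⟩ > 0`: the game walks through the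
Weyl orbit of `ρ`. Every firing adds at least one chip, while `‖ρ - x‖ = ‖ρ‖` bounds `x`, hence the
number of chips and the length of any game. In a terminal configuration `ρ - x = w ρ`, where `w⁻¹`
sends every simple root, hence every positive root, to a negative root; so `w ρ = -ρ`, and
`x = 2ρ` determines `c`. Finally the sum of the positive coroots pairs to `2` with every simple
root, so `|c| = ⟨ρ, ∑ γ^∨⟩ = ∑ ht(γ^∨)`; the heights are integers because positive coroots are
reached from simple coroots by simple reflections.
-/

open Finset

lemma rsPair_self {γ : EuclideanSpace ℝ (Fin d)} (h : γ ≠ 0) : rsPair γ γ = 2 := by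
  rw [rsPair, mul_div_assoc, div_self (inner_self_ne_zero.mpr h), mul_one]

lemma corootForm_apply (γ x : EuclideanSpace ℝ (Fin d)) : corootForm γ x = rsPair x γ := rfl

lemma inner_rsCoroot (γ x : EuclideanSpace ℝ (Fin d)) : ⟪rsCoroot γ, x⟫ = rsPair x γ := by
  rw [rsCoroot, real_inner_smul_left, rsPair, real_inner_comm x γ]
  ring

lemma rsCoroot_neg (γ : EuclideanSpace ℝ (Fin d)) : rsCoroot (-γ) = -rsCoroot γ := by
  rw [rsCoroot, rsCoroot, inner_neg_neg, smul_neg]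

namespace RootSystemBase

variable (R : RootSystemBase n d)

lemma inner_self_pos {β : EuclideanSpace ℝ (Fin d)} (hβ : β ∈ R.Φ) : 0 < ⟪β, β⟫ :=
  real_inner_self_pos.mpr (R.nonzero β hβ)

lemma sRefl_apply (i : Fin n) (x : EuclideanSpace ℝ (Fin d)) :
    R.sRefl i x = x - rsPair x (R.α i) • R.α i :=
  Module.reflection_apply _ _

lemma sRefl_sRefl (i : Fin n) (x : EuclideanSpace ℝ (Fin d)) : R.sRefl i (R.sRefl i x) = x :=
  Module.involutive_reflection (R.corootForm_alpha_self i) x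

lemma sRefl_inv (i : Fin n) : (R.sRefl i)⁻¹ = R.sRefl i :=
  inv_eq_of_mul_eq_one_left (LinearEquiv.ext (R.sRefl_sRefl i))

lemma sRefl_alpha_self (i : Fin n) : R.sRefl i (R.α i) = -R.α i :=
  Module.reflection_apply_self _

lemma inner_sRefl (i : Fin n) (x y : EuclideanSpace ℝ (Fin d)) :
    ⟪R.sRefl i x, R.sRefl i y⟫ = ⟪x, y⟫ := by
  have h := R.inner_alpha_ne_zero i
  simp only [sRefl_apply, rsPair, inner_sub_left, inner_sub_right, real_inner_smul_left,
    real_inner_smul_right, real_inner_comm (R.α i) y]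
  field_simp
  ring

lemma sRefl_mem (i : Fin n) {β : EuclideanSpace ℝ (Fin d)} (hβ : β ∈ R.Φ) : R.sRefl i β ∈ R.Φ := by
  rw [sRefl_apply]
  exact R.reflClosed β hβ _ (R.α_mem i)

lemma rsCoroot_sRefl (i : Fin n) (γ : EuclideanSpace ℝ (Fin d)) :
    rsCoroot (R.sRefl i γ) = R.sRefl i (rsCoroot γ) := by
  rw [rsCoroot, rsCoroot, map_smul, R.inner_sRefl]

lemma neg_mem {β : EuclideanSpace ℝ (Fin d)} (hβ : β ∈ R.Φ) : -β ∈ R.Φ := by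
  have h := R.reflClosed β hβ β hβ
  rwa [rsPair_self (R.nonzero β hβ), two_smul, sub_add_eq_sub_sub, sub_self, zero_sub] at h

lemma eq_of_sum_smul_alpha_eq {c c' : Fin n → ℤ}
    (h : ∑ i, (c i : ℝ) • R.α i = ∑ i, (c' i : ℝ) • R.α i) : c = c' := by
  funext i
  exact_mod_cast R.indep.eq_coords_of_eq h i

lemma mem_posRoots {β : EuclideanSpace ℝ (Fin d)} :
    β ∈ R.posRoots ↔ β ∈ R.Φ ∧ ∃ c : Fin n → ℤ, β = ∑ i, (c i : ℝ) • R.α i ∧ ∀ i, 0 ≤ c i :=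
  mem_filter

lemma posRoots_subset : R.posRoots ⊆ R.Φ := filter_subset _ _

lemma alpha_eq_sum (v : Fin n) : R.α v = ∑ i, ((Pi.single v 1 : Fin n → ℤ) i : ℝ) • R.α i := by
  simp [Pi.single_apply]

lemma alpha_mem_posRoots (v : Fin n) : R.α v ∈ R.posRoots :=
  R.mem_posRoots.2 ⟨R.α_mem v, _, R.alpha_eq_sum v, fun i => by by_cases i = v <;> simp [*]⟩

lemma neg_alpha_notMem_posRoots (v : Fin n) : -R.α v ∉ R.posRoots := by
  intro h
  obtain ⟨-, c, hc, hcpos⟩ := R.mem_posRoots.1 h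
  have hsum : ∑ i, ((-Pi.single v 1 : Fin n → ℤ) i : ℝ) • R.α i = ∑ i, (c i : ℝ) • R.α i := by
    simp only [Pi.neg_apply, Int.cast_neg, neg_smul, sum_neg_distrib, ← R.alpha_eq_sum, hc]
  have h1 := congrFun (R.eq_of_sum_smul_alpha_eq hsum) v
  have h2 := hcpos v
  simp only [Pi.neg_apply, Pi.single_eq_same] at h1
  omega

lemma mem_posRoots_of_coeff_pos {β : EuclideanSpace ℝ (Fin d)} (hβ : β ∈ R.Φ) {c : Fin n → ℤ}
    (hc : β = ∑ i, (c i : ℝ) • R.α i) {i : Fin n} (hi : 0 < c i) : β ∈ R.posRoots := by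
  obtain ⟨e, he, hsign⟩ := R.base β hβ
  obtain rfl : e = c := R.eq_of_sum_smul_alpha_eq (he.symm.trans hc)
  refine R.mem_posRoots.2 ⟨hβ, e, he, hsign.resolve_right fun hneg => ?_⟩
  exact (hneg i).not_gt hi

lemma mem_posRoots_or_neg_mem {β : EuclideanSpace ℝ (Fin d)} (hβ : β ∈ R.Φ) :
    β ∈ R.posRoots ∨ -β ∈ R.posRoots := by
  obtain ⟨c, hc, hs | hs⟩ := R.base β hβ
  · exact Or.inl (R.mem_posRoots.2 ⟨hβ, c, hc, hs⟩)
  · refine Or.inr (R.mem_posRoots.2 ⟨R.neg_mem hβ, -c, ?_, fun i => neg_nonneg.2 (hs i)⟩)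
    simp [hc, neg_smul]

lemma sRefl_eq_sum (v : Fin n) {β : EuclideanSpace ℝ (Fin d)} {c : Fin n → ℤ}
    (hc : β = ∑ i, (c i : ℝ) • R.α i) {k : ℤ} (hk : rsPair β (R.α v) = k) :
    R.sRefl v β = ∑ i, ((c i - (Pi.single v k : Fin n → ℤ) i : ℤ) : ℝ) • R.α i := by
  simp [sRefl_apply, hk, sub_smul, Pi.single_apply, ← hc]

/-- By reducedness `β` has a positive coefficient away from `v`, which `s_v` does not change. -/
lemma sRefl_mem_posRoots (v : Fin n) {β : EuclideanSpace ℝ (Fin d)} (hβ : β ∈ R.posRoots)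
    (hne : β ≠ R.α v) : R.sRefl v β ∈ R.posRoots := by
  obtain ⟨hβΦ, c, hc, hcpos⟩ := R.mem_posRoots.1 hβ
  obtain ⟨k, hk⟩ := R.crystallographic β hβΦ (R.α v) (R.α_mem v)
  obtain ⟨i, hiv, hi⟩ : ∃ i, i ≠ v ∧ 0 < c i := by
    by_contra! hall
    have hβv : β = (c v : ℝ) • R.α v := by
      rw [hc, sum_eq_single v (fun i _ hi => by simp [le_antisymm (hall i hi) (hcpos i)])
        (by simp)]
    rcases R.reduced _ (R.α_mem v) (c v) (hβv ▸ hβΦ) with h | h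
    · exact hne (by rw [hβv, h, one_smul])
    · have : (0 : ℝ) ≤ c v := by exact_mod_cast hcpos v
      linarith
  exact R.mem_posRoots_of_coeff_pos (R.sRefl_mem v hβΦ) (R.sRefl_eq_sum v hc hk)
    (i := i) (by simpa [Pi.single_apply, hiv] using hi)

lemma sRefl_mem_posRoots_erase (v : Fin n) {β : EuclideanSpace ℝ (Fin d)}
    (hβ : β ∈ R.posRoots.erase (R.α v)) : R.sRefl v β ∈ R.posRoots.erase (R.α v) := by
  obtain ⟨hne, hβ⟩ := mem_erase.1 hβ
  refine mem_erase.2 ⟨fun h => R.neg_alpha_notMem_posRoots v ?_, R.sRefl_mem_posRoots v hβ hne⟩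
  rwa [← R.sRefl_alpha_self, ← h, R.sRefl_sRefl]

lemma sum_posRoots_sRefl {M : Type*} [AddCommGroup M] (v : Fin n)
    (g : EuclideanSpace ℝ (Fin d) → M) :
    ∑ γ ∈ R.posRoots, g (R.sRefl v γ) = ∑ γ ∈ R.posRoots, g γ - g (R.α v) + g (-R.α v) := by
  have hv := R.alpha_mem_posRoots v
  have hperm : ∑ γ ∈ R.posRoots.erase (R.α v), g (R.sRefl v γ)
      = ∑ γ ∈ R.posRoots.erase (R.α v), g γ :=
    sum_nbij' (R.sRefl v) (R.sRefl v) (fun _ => R.sRefl_mem_posRoots_erase v)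
      (fun _ => R.sRefl_mem_posRoots_erase v) (fun γ _ => R.sRefl_sRefl v γ)
      (fun γ _ => R.sRefl_sRefl v γ) (fun _ _ => rfl)
  rw [← sum_erase_add _ _ hv, ← sum_erase_add _ _ hv, hperm, R.sRefl_alpha_self]
  abel

def rho : EuclideanSpace ℝ (Fin d) := (2 : ℝ)⁻¹ • ∑ γ ∈ R.posRoots, γ

def sumPosCoroots : EuclideanSpace ℝ (Fin d) := ∑ γ ∈ R.posRoots, rsCoroot γ

lemma corootForm_eq_of_sRefl_eq (v : Fin n) {x : EuclideanSpace ℝ (Fin d)} {t : ℝ}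
    (h : R.sRefl v x = x - t • R.α v) : corootForm (R.α v) x = t := by
  rw [sRefl_apply] at h
  exact smul_left_injective ℝ (R.alpha_ne_zero v) (sub_right_injective h)

lemma sRefl_rho (v : Fin n) : R.sRefl v R.rho = R.rho - R.α v := by
  have h := R.sum_posRoots_sRefl v (fun γ => γ)
  rw [rho, map_smul, map_sum, h]
  module

lemma corootForm_rho (v : Fin n) : corootForm (R.α v) R.rho = 1 :=
  R.corootForm_eq_of_sRefl_eq v (by rw [sRefl_rho, one_smul])

lemma inner_sumPosCoroots_alpha (v : Fin n) : ⟪R.sumPosCoroots, R.α v⟫ = 2 := by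
  have hs : R.sRefl v R.sumPosCoroots
      = R.sumPosCoroots - (4 / ⟪R.α v, R.α v⟫) • R.α v := by
    have h := R.sum_posRoots_sRefl v rsCoroot
    rw [sumPosCoroots, map_sum]
    simp only [← R.rsCoroot_sRefl v]
    rw [h, rsCoroot_neg, show rsCoroot (R.α v) = (2 / ⟪R.α v, R.α v⟫) • R.α v from rfl]
    module
  have h := R.corootForm_eq_of_sRefl_eq v hs
  have h0 := R.inner_alpha_ne_zero v
  rw [corootForm_apply, rsPair] at h
  field_simp at h
  linarith

lemma inner_rho_alpha_pos (v : Fin n) : 0 < ⟪R.rho, R.α v⟫ := by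
  have h := R.corootForm_rho v
  have hα := R.inner_self_pos (R.α_mem v)
  rw [corootForm_apply, rsPair, div_eq_one_iff_eq hα.ne'] at h
  linarith

lemma inner_rsCoroot_alpha_rho (j : Fin n) : ⟪rsCoroot (R.α j), R.rho⟫ = 1 := by
  rw [inner_rsCoroot, ← corootForm_apply, R.corootForm_rho]

lemma inner_rho_pos {β : EuclideanSpace ℝ (Fin d)} (hβ : β ∈ R.posRoots) : 0 < ⟪R.rho, β⟫ := by
  obtain ⟨hβΦ, c, rfl, hcpos⟩ := R.mem_posRoots.1 hβ
  obtain ⟨i, hi⟩ : ∃ i, c i ≠ 0 := by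
    by_contra! h
    exact R.nonzero _ hβΦ (by simp [h])
  have hterm (j : Fin n) : 0 ≤ ⟪R.rho, (c j : ℝ) • R.α j⟫ := by
    rw [real_inner_smul_right]
    exact mul_nonneg (by exact_mod_cast hcpos j) (R.inner_rho_alpha_pos j).le
  rw [inner_sum]
  refine sum_pos' (fun j _ => hterm j) ⟨i, mem_univ i, ?_⟩
  rw [real_inner_smul_right]
  exact mul_pos (by exact_mod_cast (hcpos i).lt_of_ne' hi) (R.inner_rho_alpha_pos i)

lemma seqProd_cons (v : Fin n) (l : List (Fin n)) :
    R.seqProd (v :: l) = R.seqProd l * R.sRefl v := by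
  simp [seqProd]

lemma sRefl_mem_weyl (i : Fin n) : R.sRefl i ∈ R.weyl :=
  Subgroup.subset_closure (Set.mem_range_self i)

lemma seqProd_mem_weyl (l : List (Fin n)) : R.seqProd l ∈ R.weyl :=
  R.weyl.list_prod_mem <| by simpa using fun i _ => R.sRefl_mem_weyl i

lemma inner_weyl_apply {w : EuclideanSpace ℝ (Fin d) ≃ₗ[ℝ] EuclideanSpace ℝ (Fin d)}
    (hw : w ∈ R.weyl) (x y : EuclideanSpace ℝ (Fin d)) : ⟪w x, w y⟫ = ⟪x, y⟫ := by
  induction hw using Subgroup.closure_induction'' generalizing x y with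
  | mem _ hs => obtain ⟨i, rfl⟩ := hs; exact R.inner_sRefl i x y
  | inv_mem _ hs => obtain ⟨i, rfl⟩ := hs; rw [sRefl_inv]; exact R.inner_sRefl i x y
  | one => rfl
  | mul _ _ _ _ ihw ihw' => rw [LinearEquiv.mul_apply, LinearEquiv.mul_apply, ihw, ihw']

lemma weyl_apply_mem {w : EuclideanSpace ℝ (Fin d) ≃ₗ[ℝ] EuclideanSpace ℝ (Fin d)}
    (hw : w ∈ R.weyl) {β : EuclideanSpace ℝ (Fin d)} (hβ : β ∈ R.Φ) : w β ∈ R.Φ := by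
  induction hw using Subgroup.closure_induction'' generalizing β with
  | mem _ hs => obtain ⟨i, rfl⟩ := hs; exact R.sRefl_mem i hβ
  | inv_mem _ hs => obtain ⟨i, rfl⟩ := hs; rw [sRefl_inv]; exact R.sRefl_mem i hβ
  | one => exact hβ
  | mul _ _ _ _ ihw ihw' => exact ihw (ihw' hβ)

lemma exists_inner_alpha_pos {β : EuclideanSpace ℝ (Fin d)} (hβ : β ∈ R.posRoots) :
    ∃ v, 0 < ⟪β, R.α v⟫ := by
  obtain ⟨hβΦ, c, hc, hcpos⟩ := R.mem_posRoots.1 hβ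
  by_contra! h
  have hle : ⟪β, β⟫ ≤ 0 := by
    nth_rewrite 2 [hc]
    rw [inner_sum]
    refine sum_nonpos fun i _ => ?_
    rw [real_inner_smul_right]
    exact mul_nonpos_of_nonneg_of_nonpos (by exact_mod_cast hcpos i) (h i)
  exact hle.not_gt (R.inner_self_pos hβΦ)

lemma exists_sRefl_mem_posRoots_inner_rho_lt {β : EuclideanSpace ℝ (Fin d)}
    (hβ : β ∈ R.posRoots) (hsimple : ∀ v, β ≠ R.α v) :
    ∃ v, R.sRefl v β ∈ R.posRoots ∧ ⟪R.rho, R.sRefl v β⟫ < ⟪R.rho, β⟫ := by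
  obtain ⟨v, hv⟩ := R.exists_inner_alpha_pos hβ
  refine ⟨v, R.sRefl_mem_posRoots v hβ (hsimple v), ?_⟩
  have hpair : 0 < rsPair β (R.α v) :=
    div_pos (by linarith) (R.inner_self_pos (R.α_mem v))
  rw [sRefl_apply, inner_sub_right, real_inner_smul_right]
  linarith [mul_pos hpair (R.inner_rho_alpha_pos v)]

/-- Induction on the number of positive roots `γ` with `⟪ρ, γ⟫ < ⟪ρ, β⟫`. -/
theorem posRoots_induction {P : EuclideanSpace ℝ (Fin d) → Prop} (simple : ∀ i, P (R.α i))
    (step : ∀ v β, R.sRefl v β ∈ R.posRoots → P (R.sRefl v β) → P β) :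
    ∀ β ∈ R.posRoots, P β := by
  intro β hβ
  induction hm : #{γ ∈ R.posRoots | ⟪R.rho, γ⟫ < ⟪R.rho, β⟫} using Nat.strong_induction_on
    generalizing β with
  | _ m ih =>
    by_cases hsimple : ∃ i, β = R.α i
    · obtain ⟨i, rfl⟩ := hsimple
      exact simple i
    simp only [not_exists] at hsimple
    obtain ⟨v, hv, hlt⟩ := R.exists_sRefl_mem_posRoots_inner_rho_lt hβ hsimple
    refine step v β hv (ih _ ?_ _ hv rfl)
    rw [← hm]
    refine card_lt_card ((ssubset_iff_of_subset fun γ hγ => ?_).2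
      ⟨_, mem_filter.2 ⟨hv, hlt⟩, fun h => (mem_filter.1 h).2.false⟩)
    exact mem_filter.2 ⟨(mem_filter.1 hγ).1, (mem_filter.1 hγ).2.trans hlt⟩

lemma rsCoroot_sRefl_eq_sub (v : Fin n) (δ : EuclideanSpace ℝ (Fin d)) :
    rsCoroot (R.sRefl v δ) = rsCoroot δ - rsPair (R.α v) δ • rsCoroot (R.α v) := by
  rw [R.rsCoroot_sRefl, sRefl_apply]
  simp only [rsCoroot, rsPair, smul_smul, real_inner_smul_left, real_inner_comm δ (R.α v)]
  congr 2
  ring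

def corootLattice : Submodule ℤ (EuclideanSpace ℝ (Fin d)) :=
  Submodule.span ℤ (Set.range fun j => rsCoroot (R.α j))

lemma rsCoroot_mem_corootLattice : ∀ β ∈ R.posRoots, rsCoroot β ∈ R.corootLattice := by
  refine R.posRoots_induction (fun i => Submodule.subset_span ⟨i, rfl⟩) fun v β hvβ hmem => ?_
  obtain ⟨k, hk⟩ := R.crystallographic (R.α v) (R.α_mem v) _ (R.posRoots_subset hvβ)
  have h := R.rsCoroot_sRefl_eq_sub v (R.sRefl v β)
  rw [R.sRefl_sRefl, hk, Int.cast_smul_eq_zsmul] at h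
  rw [h]
  exact sub_mem hmem (Submodule.smul_mem _ k (Submodule.subset_span ⟨v, rfl⟩))

lemma htI_univ_rsCoroot {γ : EuclideanSpace ℝ (Fin d)} (hγ : γ ∈ R.posRoots) :
    (R.htI univ (rsCoroot γ) : ℝ) = ⟪rsCoroot γ, R.rho⟫ := by
  have hex : ∃ k : Fin n → ℤ, rsCoroot γ = ∑ j, (k j : ℝ) • rsCoroot (R.α j) := by
    obtain ⟨k, hk⟩ := (Submodule.mem_span_range_iff_exists_fun ℤ).1
      (R.rsCoroot_mem_corootLattice γ hγ)
    exact ⟨k, by simp only [← hk, Int.cast_smul_eq_zsmul]⟩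
  rw [htI, corootCoeffs, dif_pos hex]
  conv_rhs => rw [hex.choose_spec]
  simp [sum_inner, real_inner_smul_left, inner_rsCoroot_alpha_rho]

def chipVec (c : Fin n → ℤ) : EuclideanSpace ℝ (Fin d) := ∑ u, (c u : ℝ) • R.α u

lemma chipVec_injective : Function.Injective R.chipVec :=
  fun _ _ h => R.eq_of_sum_smul_alpha_eq h

lemma chipVec_add_single (c : Fin n → ℤ) (v : Fin n) (k : ℤ) :
    R.chipVec (c + Pi.single v k) = R.chipVec c + (k : ℝ) • R.α v := by
  simp [chipVec, add_smul, sum_add_distrib, Pi.single_apply]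

lemma cartan_cast (u v : Fin n) : (R.cartan u v : ℝ) = rsPair (R.α u) (R.α v) := by
  obtain ⟨k, hk⟩ := R.crystallographic _ (R.α_mem u) _ (R.α_mem v)
  rw [cartan, hk, Int.floor_intCast]

lemma fire_eq_add_single (I : Finset (Fin n)) (c : Fin n → ℤ) (v : Fin n) :
    R.fire I c v = c + Pi.single v (R.chipBound I c v - 2 * c v) := by
  ext u
  rcases eq_or_ne u v with rfl | huv
  · simp [fire]
    ring
  · simp [fire, huv]

lemma chipBound_univ_sub (c : Fin n → ℤ) (v : Fin n) :
    ((R.chipBound univ c v - 2 * c v : ℤ) : ℝ) = corootForm (R.α v) (R.rho - R.chipVec c) := by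
  rw [map_sub, R.corootForm_rho, chipVec, map_sum, chipBound, if_pos (mem_univ v),
    ← add_sum_erase _ _ (mem_univ v)]
  simp only [map_smul, corootForm_apply, rsPair_self (R.alpha_ne_zero v), smul_eq_mul]
  push_cast
  simp only [R.cartan_cast, neg_mul, sum_neg_distrib, mul_comm (c _ : ℝ)]
  ring

lemma rho_sub_chipVec_fire (c : Fin n → ℤ) (v : Fin n) :
    R.rho - R.chipVec (R.fire univ c v) = R.sRefl v (R.rho - R.chipVec c) := by
  rw [fire_eq_add_single, chipVec_add_single, chipBound_univ_sub, sRefl_apply, ← corootForm_apply]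
  abel

lemma rho_sub_chipVec_foldl (l : List (Fin n)) (c : Fin n → ℤ) :
    R.rho - R.chipVec (l.foldl (R.fire univ) c) = R.seqProd l (R.rho - R.chipVec c) := by
  induction l generalizing c with
  | nil => rfl
  | cons v l ih =>
    rw [List.foldl_cons, ih, rho_sub_chipVec_fire, seqProd_cons, LinearEquiv.mul_apply]

lemma rho_sub_chipVec_play (l : List (Fin n)) :
    R.rho - R.chipVec (R.play univ l) = R.seqProd l R.rho := by
  simpa [chipVec, play] using R.rho_sub_chipVec_foldl l 0

lemma sad_univ_iff (c : Fin n → ℤ) (v : Fin n) :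
    R.Sad univ c v ↔ 0 < corootForm (R.α v) (R.rho - R.chipVec c) := by
  rw [← chipBound_univ_sub, Int.cast_pos, sub_pos]
  rfl

lemma sum_fire (I : Finset (Fin n)) (c : Fin n → ℤ) (v : Fin n) :
    ∑ u, R.fire I c v u = ∑ u, c u + (R.chipBound I c v - 2 * c v) := by
  simp [fire_eq_add_single, sum_add_distrib]

lemma length_add_sum_le_sum_foldl {I : Finset (Fin n)} {l : List (Fin n)} {c : Fin n → ℤ}
    (hl : R.ValidFrom I c l) : l.length + ∑ u, c u ≤ ∑ u, l.foldl (R.fire I) c u := by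
  induction l generalizing c with
  | nil => simp
  | cons v l ih =>
    obtain ⟨hsad, hl⟩ := hl
    have hrest := ih hl
    rw [sum_fire] at hrest
    rw [Sad] at hsad
    simp only [List.length_cons, List.foldl_cons]
    push_cast
    linarith

lemma two_mul_sum_eq_inner_chipVec (c : Fin n → ℤ) :
    2 * ∑ u, (c u : ℝ) = ⟪R.chipVec c, R.sumPosCoroots⟫ := by
  simp only [chipVec, sum_inner, real_inner_smul_left, real_inner_comm _ (R.α _),
    inner_sumPosCoroots_alpha, mul_sum, mul_comm]

lemma norm_weyl_apply {w : EuclideanSpace ℝ (Fin d) ≃ₗ[ℝ] EuclideanSpace ℝ (Fin d)}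
    (hw : w ∈ R.weyl) (x : EuclideanSpace ℝ (Fin d)) : ‖w x‖ = ‖x‖ := by
  rw [norm_eq_sqrt_real_inner, norm_eq_sqrt_real_inner, R.inner_weyl_apply hw]

lemma norm_chipVec_play_le (l : List (Fin n)) : ‖R.chipVec (R.play univ l)‖ ≤ 2 * ‖R.rho‖ :=
  calc ‖R.chipVec (R.play univ l)‖ = ‖R.rho - (R.rho - R.chipVec (R.play univ l))‖ := by
        rw [sub_sub_cancel]
    _ ≤ ‖R.rho‖ + ‖R.rho - R.chipVec (R.play univ l)‖ := norm_sub_le _ _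
    _ = 2 * ‖R.rho‖ := by
        rw [rho_sub_chipVec_play, R.norm_weyl_apply (R.seqProd_mem_weyl l)]
        ring

lemma length_le_of_valid {l : List (Fin n)} (hl : R.Valid univ l) :
    (l.length : ℝ) ≤ ‖R.rho‖ * ‖R.sumPosCoroots‖ := by
  have hchips := R.length_add_sum_le_sum_foldl hl
  simp only [Pi.zero_apply, sum_const_zero, add_zero] at hchips
  calc (l.length : ℝ) ≤ ∑ u, (R.play univ l u : ℝ) := by exact_mod_cast hchips
    _ = ⟪R.chipVec (R.play univ l), R.sumPosCoroots⟫ / 2 := by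
        rw [← two_mul_sum_eq_inner_chipVec]
        ring
    _ ≤ ‖R.chipVec (R.play univ l)‖ * ‖R.sumPosCoroots‖ / 2 := by
        gcongr
        exact real_inner_le_norm _ _
    _ ≤ 2 * ‖R.rho‖ * ‖R.sumPosCoroots‖ / 2 := by
        gcongr
        exact R.norm_chipVec_play_le l
    _ = ‖R.rho‖ * ‖R.sumPosCoroots‖ := by ring

lemma validFrom_append_singleton {I : Finset (Fin n)} {c : Fin n → ℤ} {l : List (Fin n)}
    {v : Fin n} :
    R.ValidFrom I c (l ++ [v]) ↔ R.ValidFrom I c l ∧ R.Sad I (l.foldl (R.fire I) c) v := by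
  induction l generalizing c with
  | nil => simp [ValidFrom]
  | cons u l ih => simp [ValidFrom, ih, and_assoc]

lemma exists_maximalSeq_of_length_le {I : Finset (Fin n)} {N : ℕ}
    (h : ∀ l, R.Valid I l → l.length ≤ N) : ∃ l, R.MaximalSeq I l := by
  by_contra! hnone
  have hlong (m : ℕ) : ∃ l, R.Valid I l ∧ l.length = m := by
    induction m with
    | zero => exact ⟨[], trivial, rfl⟩
    | succ m ih =>
      obtain ⟨l, hl, rfl⟩ := ih
      obtain ⟨v, hv⟩ : ∃ v, R.Sad I (R.play I l) v := by
        simpa [MaximalSeq, hl] using hnone l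
      exact ⟨l ++ [v], R.validFrom_append_singleton.2 ⟨hl, hv⟩, by simp⟩
  obtain ⟨l, hl, hlen⟩ := hlong (N + 1)
  have := h l hl
  omega

/-- `γ ↦ -w γ` maps `Φ⁺` injectively into itself, hence onto it. -/
lemma weyl_apply_rho_eq_neg {w : EuclideanSpace ℝ (Fin d) ≃ₗ[ℝ] EuclideanSpace ℝ (Fin d)}
    (hw : w ∈ R.weyl) (h : ∀ v, ⟪R.rho, w (R.α v)⟫ ≤ 0) : w R.rho = -R.rho := by
  have hneg : ∀ γ ∈ R.posRoots, -w γ ∈ R.posRoots := by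
    intro γ hγ
    obtain ⟨hγΦ, c, rfl, hcpos⟩ := R.mem_posRoots.1 hγ
    refine (R.mem_posRoots_or_neg_mem (R.weyl_apply_mem hw hγΦ)).resolve_left fun hpos => ?_
    refine (R.inner_rho_pos hpos).not_ge ?_
    rw [map_sum, inner_sum]
    refine sum_nonpos fun i _ => ?_
    rw [map_smul, real_inner_smul_right]
    exact mul_nonpos_of_nonneg_of_nonpos (by exact_mod_cast hcpos i) (h i)
  have hinj : Set.InjOn (fun γ => -w γ) R.posRoots :=
    fun _ _ _ _ hγ => w.injective (neg_inj.1 hγ)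
  have hsum : ∑ γ ∈ R.posRoots, -w γ = ∑ γ ∈ R.posRoots, γ :=
    sum_nbij _ hneg hinj (surjOn_of_injOn_of_card_le _ hneg hinj le_rfl) fun _ _ => rfl
  rw [rho, map_smul, map_sum, ← neg_neg (∑ γ ∈ R.posRoots, w γ), ← sum_neg_distrib, hsum,
    smul_neg]

lemma seqProd_rho_of_maximalSeq {l : List (Fin n)} (hl : R.MaximalSeq univ l) :
    R.seqProd l R.rho = -R.rho := by
  have hw := R.seqProd_mem_weyl l
  have hantidominant (v : Fin n) : ⟪R.rho, (R.seqProd l)⁻¹ (R.α v)⟫ ≤ 0 := by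
    have hsad := hl.2 v
    rw [sad_univ_iff, rho_sub_chipVec_play, not_lt, corootForm_apply, rsPair] at hsad
    rw [← R.inner_weyl_apply hw, LinearEquiv.coe_inv, LinearEquiv.apply_symm_apply]
    by_contra! hpos
    exact hsad.not_gt (div_pos (mul_pos two_pos hpos) (R.inner_self_pos (R.α_mem v)))
  have h := congrArg (R.seqProd l)
    (R.weyl_apply_rho_eq_neg (inv_mem hw) hantidominant)
  rw [LinearEquiv.coe_inv, LinearEquiv.apply_symm_apply, map_neg] at h
  exact neg_eq_iff_eq_neg.mp h.symm

lemma chipVec_play_of_maximalSeq {l : List (Fin n)} (hl : R.MaximalSeq univ l) :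
    R.chipVec (R.play univ l) = (2 : ℝ) • R.rho := by
  have h := R.rho_sub_chipVec_play l
  rw [R.seqProd_rho_of_maximalSeq hl] at h
  linear_combination (norm := module) -h

lemma sum_play_of_maximalSeq {l : List (Fin n)} (hl : R.MaximalSeq univ l) :
    ∑ v, (R.play univ l v : ℝ) = ⟪R.rho, R.sumPosCoroots⟫ := by
  have h := R.two_mul_sum_eq_inner_chipVec (R.play univ l)
  rw [R.chipVec_play_of_maximalSeq hl, real_inner_smul_left] at h
  linarith

lemma inner_rho_sumPosCoroots :
    ⟪R.rho, R.sumPosCoroots⟫ = ∑ γ ∈ R.posRoots, (R.htI univ (rsCoroot γ) : ℝ) := by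
  rw [sumPosCoroots, inner_sum]
  exact sum_congr rfl fun γ hγ => by rw [real_inner_comm, R.htI_univ_rsCoroot hγ]

end RootSystemBase

/-- If all vertices are modified (`I = {1, …, n}`), the total number of chips
of the unique final configuration equals the sum of the heights of all positive coroots. -/
theorem statement5 {n d : ℕ} (R : RootSystemBase n d) :
    (∃ N : ℕ, ∀ l : List (Fin n), R.Valid Finset.univ l → l.length ≤ N) ∧
    ∃ cfin : Fin n → ℤ,
      (∃ l : List (Fin n), R.MaximalSeq Finset.univ l) ∧
      (∀ l : List (Fin n), R.MaximalSeq Finset.univ l → R.play Finset.univ l = cfin) ∧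
      ∑ v, cfin v = ∑ γ ∈ R.posRoots, R.htI Finset.univ (rsCoroot γ) := by
  have hbound (l : List (Fin n)) (hl : R.Valid univ l) :
      l.length ≤ ⌊‖R.rho‖ * ‖R.sumPosCoroots‖⌋₊ :=
    Nat.le_floor (R.length_le_of_valid hl)
  obtain ⟨l₀, hl₀⟩ := R.exists_maximalSeq_of_length_le hbound
  refine ⟨⟨_, hbound⟩, R.play univ l₀, ⟨l₀, hl₀⟩, fun l hl => R.chipVec_injective ?_, ?_⟩
  · rw [R.chipVec_play_of_maximalSeq hl, R.chipVec_play_of_maximalSeq hl₀]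
  · exact_mod_cast (R.sum_play_of_maximalSeq hl₀).trans R.inner_rho_sumPosCoroots
end
end

section
/- Let (i_1,…,i_m) be a valid firing sequence in the Modified Kostant Game with active set I, let c^{(m)} be the resulting configuration, and set w_m = s_{i_m} ⋯ s_{i_1} and β = Σ_{p∈I} β_p in the extended space E'. Then w_m(β) − β = Σ_{v=1}^n c^{(m)}_v α_v; that is, the chip configuration is recovered as the tuple of coefficients of the simple roots in w_m(β) − β. -/
open scoped Classical RealInnerProductSpace

noncomputable section

variable {n d : ℕ}

/-!
Write a configuration `c` as the vector `∑ᵥ c_v α_v + β` of `E'`. Since `⟨α_u, α_v^∨⟩ = a_{uv}`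
and `⟨β, α_v^∨⟩ = -[v ∈ I]`, pairing this vector with `α_v^∨` gives
`2 c_v - (∑_{u ≠ v} (-a_{uv}) c_u + [v ∈ I])`, so the reflection `s_v` changes only the
`α_v`-coefficient, from `c_v` to exactly the value that firing `v` puts there. Hence each firing
step is the action of a simple reflection, and the claim follows by induction on the sequence.
-/

namespace RootSystemBase

variable (R : RootSystemBase n d)

def configVec (c : Fin n → ℤ) : EuclideanSpace ℝ (Fin d) := ∑ v, (c v : ℝ) • R.α v

@[simp]
lemma configVec_zero : R.configVec 0 = 0 := by simp [configVec]

lemma corootForm_alpha (u v : Fin n) : corootForm (R.α v) (R.α u) = R.cartan u v := by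
  obtain ⟨k, hk⟩ := R.crystallographic _ (R.α_mem u) _ (R.α_mem v)
  rw [cartan, hk, Int.floor_intCast]
  exact hk

lemma cartan_self (v : Fin n) : R.cartan v v = 2 := by
  exact_mod_cast (R.corootForm_alpha v v).symm.trans (R.corootForm_alpha_self v)

lemma two_mul_sub_chipBound (I : Finset (Fin n)) (c : Fin n → ℤ) (v : Fin n) :
    2 * c v - R.chipBound I c v = ∑ u, c u * R.cartan u v - if v ∈ I then 1 else 0 := by
  rw [chipBound, ← Finset.add_sum_erase _ _ (Finset.mem_univ v), R.cartan_self]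
  simp only [neg_mul, Finset.sum_neg_distrib, mul_comm (R.cartan _ v)]
  ring

lemma corootForm_configVec (c : Fin n → ℤ) (v : Fin n) :
    corootForm (R.α v) (R.configVec c) = ∑ u, (c u : ℝ) * R.cartan u v := by
  simp only [configVec, map_sum, map_smul, R.corootForm_alpha, smul_eq_mul]

lemma extForm_configVec_add_betaVec (I : Finset (Fin n)) (c : Fin n → ℤ) (v : Fin n) :
    extForm R I v ((R.configVec c, 0) + betaVec n d I) = (2 * c v - R.chipBound I c v : ℤ) := by
  rw [R.extForm_apply, R.two_mul_sub_chipBound]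
  by_cases hv : v ∈ I <;> simp [hv, betaVec, R.corootForm_configVec]

lemma configVec_fire (I : Finset (Fin n)) (c : Fin n → ℤ) (v : Fin n) :
    R.configVec (R.fire I c v)
      = R.configVec c - ((2 * c v - R.chipBound I c v : ℤ) : ℝ) • R.α v := by
  have hfire : R.fire I c v = c - Pi.single v (2 * c v - R.chipBound I c v) := by
    ext u
    rcases eq_or_ne u v with rfl | hu
    · simp [fire]; ring
    · simp [fire, hu]
  simp [configVec, hfire, sub_smul, Finset.sum_sub_distrib, Pi.single_apply]

lemma extRefl_configVec_add_betaVec (I : Finset (Fin n)) (c : Fin n → ℤ) (v : Fin n) :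
    R.extRefl I v ((R.configVec c, 0) + betaVec n d I)
      = (R.configVec (R.fire I c v), 0) + betaVec n d I := by
  rw [extRefl, Module.reflection_apply, R.extForm_configVec_add_betaVec, R.configVec_fire]
  ext <;> simp [sub_add_eq_add_sub]

lemma extSeqProd_cons (I : Finset (Fin n)) (v : Fin n) (l : List (Fin n)) (x : ExtSp n d I) :
    R.extSeqProd I (v :: l) x = R.extSeqProd I l (R.extRefl I v x) := by
  simp [extSeqProd]

lemma extSeqProd_configVec_add_betaVec (I : Finset (Fin n)) (l : List (Fin n))
    (c : Fin n → ℤ) :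
    R.extSeqProd I l ((R.configVec c, 0) + betaVec n d I)
      = (R.configVec (l.foldl (R.fire I) c), 0) + betaVec n d I := by
  induction l generalizing c with
  | nil => rfl
  | cons v l ih => rw [extSeqProd_cons, extRefl_configVec_add_betaVec, ih, List.foldl_cons]

end RootSystemBase

theorem statement9_general {n d : ℕ} (R : RootSystemBase n d) (I : Finset (Fin n))
    (l : List (Fin n)) :
    R.extSeqProd I l (betaVec n d I) - betaVec n d I
      = ((∑ v, (R.play I l v : ℝ) • R.α v, 0) : ExtSp n d I) := by
  have h := R.extSeqProd_configVec_add_betaVec I l 0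
  rw [R.configVec_zero, Prod.mk_zero_zero, zero_add] at h
  rw [h, add_sub_cancel_right]
  rfl

/-- For a valid firing sequence with resulting configuration `c^{(m)}` and
`w_m = s_{i_m} ⋯ s_{i_1}`, one has `w_m(β) − β = ∑_v c^{(m)}_v α_v` in the extended space. -/
theorem statement9 {n d : ℕ} (R : RootSystemBase n d) (I : Finset (Fin n))
    (l : List (Fin n)) (hl : R.Valid I l) :
    R.extSeqProd I l (betaVec n d I) - betaVec n d I
      = ((∑ v, (R.play I l v : ℝ) • R.α v, 0) : ExtSp n d I) :=
  statement9_general R I l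
end
end
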